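/- arXiv:2605.19654 — 7 statements merged into one kernel-verified Lean document; each statement's English description precedes it below -/
import Mathlib

section
/- Let D be a digraph on n vertices such that every nonempty induced subdigraph D' of D contains a vertex v whose out-neighborhood inside D' induces an acyclic subdigraph (this condition holds, in particular, whenever χ⃗(D) ≤ 2). Then χ⃗(D) ≤ 2·⌈√n⌉. (This is the combinatorial content of the paper's Theorem that a 2-dicolorable digraph on n vertices can be properly colored with at most 2√n colors in polynomial time.) -/
/-!
Fix `k`. Induction on `|S|` shows that `D[S]` is `(k + j)`-dicolorable whenever `|S| ≤ j k`.
Pick `v ∈ S` whose out-neighbourhood `N` in `S` is acyclic. If `|N| ≥ k`, give `N` a fresh colour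
and recurse on `S \ N` with `j - 1`. Otherwise colour `S - v` recursively and give `v` a colour
missing on `N`; then `v` has no out-neighbour in its colour class, so it lies on no monochromatic
cycle. Taking `k = j = ⌈√n⌉` gives the bound.
-/

/-- A set `S` of vertices of the digraph with arc relation `A` is acyclic:
the subdigraph induced on `S` contains no directed cycle. -/
def AcyclicSet {V : Type*} (A : V → V → Prop) (S : Set V) : Prop :=
  ∀ x, ¬ Relation.TransGen (fun a b => a ∈ S ∧ b ∈ S ∧ A a b) x x

/-- The induced subdigraph `D[S]` can be properly dicolored with at most `n` colors. -/
def HasDicoloringOn {V : Type*} (A : V → V → Prop) (S : Set V) (n : ℕ) : Prop :=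
  ∃ f : V → ℕ, (∀ v ∈ S, f v < n) ∧ ∀ i, AcyclicSet A {v | v ∈ S ∧ f v = i}

/-- The dichromatic number of the induced subdigraph `D[S]`. -/
noncomputable def dichromOn {V : Type*} (A : V → V → Prop) (S : Set V) : ℕ :=
  sInf {n | HasDicoloringOn A S n}

namespace AcyclicSet

variable {V : Type*} {A : V → V → Prop} {S T : Set V} {v : V}

theorem mono (hT : AcyclicSet A T) (hST : S ⊆ T) : AcyclicSet A S := fun x hx =>
  hT x (Relation.TransGen.mono (fun _ _ hab => ⟨hST hab.1, hST hab.2.1, hab.2.2⟩) x x hx)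

theorem empty : AcyclicSet A ∅ := fun _ hx => by
  obtain ⟨_, hstep, -⟩ := Relation.TransGen.head'_iff.mp hx
  exact hstep.1

theorem not_rel_self (hS : AcyclicSet A S) (hv : v ∈ S) : ¬ A v v := fun hvv =>
  hS v (.single ⟨hv, hv, hvv⟩)

theorem insert_of_forall_not_rel (hS : AcyclicSet A S) (hv : ∀ u ∈ insert v S, ¬ A v u) :
    AcyclicSet A (insert v S) := by
  have avoid : ∀ {x y}, Relation.TransGen (fun a b => a ∈ insert v S ∧ b ∈ insert v S ∧ A a b) x y →
      y ≠ v → Relation.TransGen (fun a b => a ∈ S ∧ b ∈ S ∧ A a b) x y := by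
    intro x y hxy hy
    induction hxy with
    | single hxy =>
      have hx : x ≠ v := by rintro rfl; exact hv _ hxy.2.1 hxy.2.2
      exact .single ⟨hxy.1.resolve_left hx, hxy.2.1.resolve_left hy, hxy.2.2⟩
    | @tail b c _ hbc ih =>
      have hb : b ≠ v := by rintro rfl; exact hv _ hbc.2.1 hbc.2.2
      exact (ih hb).tail ⟨hbc.1.resolve_left hb, hbc.2.1.resolve_left hy, hbc.2.2⟩
  intro x hx
  by_cases hxv : x = v
  · subst hxv
    obtain ⟨u, hxu, -⟩ := Relation.TransGen.head'_iff.mp hx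
    exact hv u hxu.2.1 hxu.2.2
  · exact hS x (avoid hx hxv)

end AcyclicSet

namespace HasDicoloringOn

variable {V : Type*} {A : V → V → Prop} {T : Set V} {m : ℕ}

theorem empty : HasDicoloringOn A ∅ m :=
  ⟨fun _ => 0, fun _ hv => hv.elim, fun _ => AcyclicSet.empty.mono fun _ hv => hv.1⟩

theorem union_of_acyclicSet (hT : HasDicoloringOn A T m) {N : Set V} (hN : AcyclicSet A N) :
    HasDicoloringOn A (T ∪ N) (m + 1) := by
  classical
  obtain ⟨f, hf_lt, hf_acyc⟩ := hT
  refine ⟨fun w => if w ∈ N then m else f w, fun w hw => ?_, fun i => ?_⟩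
  · dsimp only
    split_ifs with hwN
    · omega
    · exact (hf_lt w (hw.resolve_right hwN)).trans (Nat.lt_succ_self m)
  by_cases him : i = m
  · subst him
    refine hN.mono fun w ⟨hw, hwi⟩ => ?_
    by_contra hwN
    simp only [hwN, if_false] at hwi
    exact (hf_lt w (hw.resolve_right hwN)).ne hwi
  · refine (hf_acyc i).mono fun w ⟨hw, hwi⟩ => ?_
    by_cases hwN : w ∈ N
    · simp only [hwN, if_true] at hwi
      exact absurd hwi.symm him
    · simp only [hwN, if_false] at hwi
      exact ⟨hw.resolve_right hwN, hwi⟩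

theorem insert [Finite V] (hT : HasDicoloringOn A T m) {v : V} (hvv : ¬ A v v)
    (hdeg : {u | u ∈ T ∧ A v u}.ncard < m) : HasDicoloringOn A (insert v T) m := by
  classical
  obtain ⟨f, hf_lt, hf_acyc⟩ := hT
  obtain ⟨c, hcm, hc⟩ : ∃ c ∈ (Finset.range m : Set ℕ), c ∉ f '' {u | u ∈ T ∧ A v u} := by
    refine Set.exists_mem_notMem_of_ncard_lt_ncard ?_
    rw [Set.ncard_coe_finset, Finset.card_range]
    exact (Set.ncard_image_le).trans_lt hdeg
  rw [Finset.coe_range, Set.mem_Iio] at hcm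
  refine ⟨Function.update f v c, fun w hw => ?_, fun i => ?_⟩
  · rcases eq_or_ne w v with rfl | hwv
    · simpa using hcm
    · simpa [hwv] using hf_lt w (hw.resolve_left hwv)
  by_cases hic : i = c
  · subst hic
    refine ((hf_acyc i).insert_of_forall_not_rel (v := v) ?_).mono ?_
    · rintro u (rfl | ⟨huT, hui⟩) hvu
      · exact hvv hvu
      · exact hc ⟨u, ⟨huT, hvu⟩, hui⟩
    · rintro w ⟨hw, hwi⟩
      rcases eq_or_ne w v with rfl | hwv
      · exact Set.mem_insert _ _
      · simp only [Function.update_of_ne hwv] at hwi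
        exact Or.inr ⟨hw.resolve_left hwv, hwi⟩
  · refine (hf_acyc i).mono fun w ⟨hw, hwi⟩ => ?_
    rcases eq_or_ne w v with rfl | hwv
    · simp only [Function.update_self] at hwi
      exact absurd hwi.symm hic
    · simp only [Function.update_of_ne hwv] at hwi
      exact ⟨hw.resolve_left hwv, hwi⟩

end HasDicoloringOn

theorem hasDicoloringOn_add_of_ncard_le_mul {V : Type*} [Finite V] {A : V → V → Prop}
    (h : ∀ S : Set V, S.Nonempty → ∃ v ∈ S, AcyclicSet A {u | u ∈ S ∧ A v u}) (k j : ℕ)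
    (S : Set V) (hS : S.ncard ≤ j * k) : HasDicoloringOn A S (k + j) := by
  induction hn : S.ncard using Nat.strong_induction_on generalizing S j with
  | _ n ih =>
    rcases S.eq_empty_or_nonempty with rfl | hne
    · exact .empty
    obtain ⟨v, hvS, hacy⟩ := h S hne
    set N := {u | u ∈ S ∧ A v u}
    have hSpos : 0 < S.ncard := (Set.ncard_pos).mpr hne
    by_cases hbig : k ≤ N.ncard
    · have hNS : N ⊆ S := Set.sep_subset _ _
      have hcard : (S \ N).ncard = S.ncard - N.ncard := Set.ncard_sdiff hNS
      have hk : 0 < k := Nat.pos_of_ne_zero fun hk => by simp [hk] at hS; omega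
      have hj : 0 < j := Nat.pos_of_ne_zero fun hj => by simp [hj] at hS; omega
      have hrest := ih _ (by omega) (j - 1) (S \ N)
        (by rw [hcard, Nat.sub_one_mul]; omega) rfl
      have hcolors : k + j = k + (j - 1) + 1 := by omega
      rw [hcolors, ← Set.sdiff_union_of_subset hNS]
      exact hrest.union_of_acyclicSet hacy
    · have hrest := ih _ (by rw [Set.ncard_sdiff_singleton_of_mem hvS]; omega) j (S \ {v})
        ((Set.ncard_sdiff_singleton_le S v).trans hS) rfl
      have hdeg : {u | u ∈ S \ {v} ∧ A v u}.ncard < k + j :=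
        ((Set.ncard_le_ncard (t := N) fun u hu => ⟨hu.1.1, hu.2⟩).trans_lt
          (not_le.mp hbig)).trans_le (Nat.le_add_right k j)
      have hvv : ¬ A v v := fun hvv => hacy.not_rel_self ⟨hvS, hvv⟩ hvv
      simpa [Set.insert_eq_of_mem hvS] using hrest.insert hvv hdeg

theorem le_ceil_sqrt_mul_self (n : ℕ) : n ≤ ⌈√(n : ℝ)⌉₊ * ⌈√(n : ℝ)⌉₊ := by
  have hsqrt : √(n : ℝ) * √(n : ℝ) ≤ ⌈√(n : ℝ)⌉₊ * ⌈√(n : ℝ)⌉₊ :=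
    mul_self_le_mul_self (Real.sqrt_nonneg _) (Nat.le_ceil _)
  rw [Real.mul_self_sqrt (Nat.cast_nonneg n)] at hsqrt
  exact_mod_cast hsqrt

theorem stmt2_general {V : Type*} [Fintype V] (A : V → V → Prop)
    (h : ∀ S : Set V, S.Nonempty → ∃ v ∈ S, AcyclicSet A {u | u ∈ S ∧ A v u}) :
    dichromOn A Set.univ ≤ 2 * ⌈Real.sqrt (Fintype.card V)⌉₊ := by
  set k := ⌈Real.sqrt (Fintype.card V)⌉₊
  have hcard : (Set.univ : Set V).ncard ≤ k * k := by
    rw [Set.ncard_univ, Nat.card_eq_fintype_card]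
    exact le_ceil_sqrt_mul_self _
  rw [two_mul]
  exact Nat.sInf_le (hasDicoloringOn_add_of_ncard_le_mul h k k Set.univ hcard)

/-- If in every nonempty induced subdigraph `D[S]` of the digraph `D` on `n` vertices
there is a vertex `v ∈ S` whose out-neighborhood inside `S` induces an acyclic
subdigraph (which holds, in particular, whenever `χ⃗(D) ≤ 2`), then
`χ⃗(D) ≤ 2⌈√n⌉`. -/
theorem stmt2 {V : Type*} [Fintype V] (A : V → V → Prop) (hirr : ∀ x, ¬ A x x)
    (h : ∀ S : Set V, S.Nonempty → ∃ v ∈ S, AcyclicSet A {u | u ∈ S ∧ A v u}) :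
    dichromOn A Set.univ ≤ 2 * ⌈Real.sqrt (Fintype.card V)⌉₊ :=
  stmt2_general A h
end

section
/- Let G be a finite undirected simple graph, H a digraph, σ a linear order on V(G), and let D' be any σ-lexicographic-product instance of (G, H) (in particular, for any choice of orientations of the cross arcs in condition (ii)). Then χ⃗(D') ≤ χ(G) · χ⃗(H). -/
/-- The dichromatic number of the digraph `D = (V, A)`. -/
noncomputable def dichrom {V : Type*} (A : V → V → Prop) : ℕ :=
  dichromOn A Set.univ

/-- The chromatic number of the (finite) undirected simple graph `G`. -/
noncomputable def chromNum {α : Type*} (G : SimpleGraph α) : ℕ :=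
  sInf {n | G.Colorable n}

/-- `D` is a `σ`-lexicographic-product instance of `(G, H)` (with `σ` the linear order
on the vertices of `G`):
(i) inside a cloud, arcs are given by `H`;
(ii) between clouds of adjacent vertices of `G`, exactly one of the two possible arcs
     is present for each pair;
(iii) between clouds of nonadjacent vertices, all arcs go from the `σ`-smaller cloud
      to the `σ`-larger cloud. -/
def IsLexInstance {α β : Type*} [LinearOrder α] (G : SimpleGraph α) (HA : β → β → Prop)
    (D : α × β → α × β → Prop) : Prop :=
  (∀ u : α, ∀ a b : β, (D (u, a) (u, b) ↔ HA a b)) ∧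
  (∀ u v : α, G.Adj u v → ∀ a b : β, (D (u, a) (v, b) ↔ ¬ D (v, b) (u, a))) ∧
  (∀ u v : α, u ≠ v → ¬ G.Adj u v → u < v →
    ∀ a b : β, D (u, a) (v, b) ∧ ¬ D (v, b) (u, a))

/-- For any `σ`-lexicographic-product instance `D` of `(G, H)` (for any choice of
the orientations of the cross arcs between adjacent clouds), `χ⃗(D) ≤ χ(G)·χ⃗(H)`. -/
theorem stmt3 {α β : Type*} [Fintype α] [Fintype β] [LinearOrder α]
    (G : SimpleGraph α) (HA : β → β → Prop) (hH : ∀ b, ¬ HA b b)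
    (D : α × β → α × β → Prop) (hD : IsLexInstance G HA D) :
    dichrom D ≤ chromNum G * dichrom HA := by
  classical
  set k := chromNum G with hk
  set m := dichrom HA with hm
  -- a proper coloring of G with k colors
  have hGcol : G.Colorable k := by
    have hne : {n | G.Colorable n}.Nonempty := ⟨Fintype.card α, G.colorable_of_fintype⟩
    exact Nat.sInf_mem hne
  obtain ⟨C⟩ := hGcol
  -- a dicoloring of H with m colors
  have hHm : HasDicoloringOn HA Set.univ m := by
    have hne : {n | HasDicoloringOn HA Set.univ n}.Nonempty := by
      refine ⟨Fintype.card β, fun b => (Fintype.equivFin β b).val,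
        fun b _ => (Fintype.equivFin β b).isLt, ?_⟩
      intro i x hx
      have hR : ∀ a b : β,
          ¬ (a ∈ {v | v ∈ Set.univ ∧ ((Fintype.equivFin β) v).val = i} ∧
             b ∈ {v | v ∈ Set.univ ∧ ((Fintype.equivFin β) v).val = i} ∧ HA a b) := by
        rintro a b ⟨⟨-, ha⟩, ⟨-, hb⟩, hab⟩
        have hab' : a = b := (Fintype.equivFin β).injective
          (Fin.val_injective (ha.trans hb.symm))
        subst hab'
        exact hH a hab
      cases hx with
      | single h => exact hR _ _ h
      | tail _ h => exact hR _ _ h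
    exact Nat.sInf_mem hne
  obtain ⟨f, hflt, hfac⟩ := hHm
  have key : HasDicoloringOn D Set.univ (k * m) := by
    refine ⟨fun p => m * (C p.1).val + f p.2, ?_, ?_⟩
    · rintro ⟨u, a⟩ -
      have h1 : (C u).val < k := (C u).isLt
      have h2 : f a < m := hflt a trivial
      calc m * (C u).val + f a < m * (C u).val + m := by omega
        _ = m * ((C u).val + 1) := by ring
        _ ≤ m * k := Nat.mul_le_mul_left m h1
        _ = k * m := Nat.mul_comm m k
    · intro t
      set S : Set (α × β) :=
        {v | v ∈ Set.univ ∧ m * (C v.1).val + f v.2 = t} with hS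
      set T : Set β := {v | v ∈ Set.univ ∧ f v = t % m} with hT
      have step : ∀ p q : α × β, (p ∈ S ∧ q ∈ S ∧ D p q) →
          p.1 < q.1 ∨ (p.1 = q.1 ∧ (p.2 ∈ T ∧ q.2 ∈ T ∧ HA p.2 q.2)) := by
        rintro ⟨u, a⟩ ⟨v, b⟩ ⟨⟨-, hp⟩, ⟨-, hq⟩, hDpq⟩
        simp only at hp hq
        have ham : f a < m := hflt a trivial
        have hbm : f b < m := hflt b trivial
        have hma : f a = t % m := by
          rw [← hp, Nat.mul_add_mod, Nat.mod_eq_of_lt ham]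
        have hmb : f b = t % m := by
          rw [← hq, Nat.mul_add_mod, Nat.mod_eq_of_lt hbm]
        have hcc : (C u).val = (C v).val := by
          have h0 : 0 < m := lt_of_le_of_lt (Nat.zero_le _) ham
          have hmm : m * (C u).val = m * (C v).val := by
            have := hp.trans hq.symm
            omega
          exact Nat.eq_of_mul_eq_mul_left h0 hmm
        rcases lt_trichotomy u v with huv | huv | huv
        · by_cases hadj : G.Adj u v
          · exact absurd (Fin.val_injective hcc) (C.valid hadj)
          · exact Or.inl huv
        · subst huv
          have hab : HA a b := (hD.1 u a b).mp hDpq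
          exact Or.inr ⟨rfl, ⟨trivial, hma⟩, ⟨trivial, hmb⟩, hab⟩
        · exfalso
          by_cases hadj : G.Adj u v
          · exact absurd (Fin.val_injective hcc) (C.valid hadj)
          · exact (hD.2.2 v u huv.ne (fun h => hadj h.symm) huv b a).2 hDpq
      have main : ∀ p q : α × β,
          Relation.TransGen (fun a b => a ∈ S ∧ b ∈ S ∧ D a b) p q →
          p.1 < q.1 ∨ (p.1 = q.1 ∧
            Relation.TransGen (fun a b => a ∈ T ∧ b ∈ T ∧ HA a b) p.2 q.2) := by
        intro p q h
        induction h with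
        | single h =>
          rcases step _ _ h with h1 | ⟨h1, h2⟩
          · exact Or.inl h1
          · exact Or.inr ⟨h1, Relation.TransGen.single h2⟩
        | tail _ hstep ih =>
          rcases step _ _ hstep with h1 | ⟨h1, h2⟩
          · rcases ih with h2 | ⟨h2, -⟩
            · exact Or.inl (h2.trans h1)
            · exact Or.inl (h2 ▸ h1)
          · rcases ih with h3 | ⟨h3, h4⟩
            · exact Or.inl (lt_of_lt_of_eq h3 h1)
            · exact Or.inr ⟨h3.trans h1, h4.tail h2⟩
      intro x hx
      rcases main x x hx with h | ⟨-, h⟩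
      · exact lt_irrefl _ h
      · exact hfac (t % m) x.2 h
  exact Nat.sInf_le key
end

section
/- For every η ∈ (0, 1/2] there exists a constant n₀ (depending only on η) such that for every finite undirected simple graph G, every digraph H with |V(H)| ≥ |V(G)| ≥ n₀, and every linear order σ on V(G), the random σ-lexicographic-product instance D^σ_G[H] — obtained by choosing the orientation in condition (ii) independently and uniformly at random for each edge {u,v} ∈ E(G) and each pair (a,b) ∈ V(H)² — is η-good for (G, H) with probability at least 1 − η². -/
/-!
Let `s = ⌈|V(H)|^η⌉`. If the instance is not `η`-good, some edge `uv` of `G` with `u < v`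
carries an `s`-subset of each cloud on which the random arcs form an acyclic bipartite
tournament. An acyclic tournament on `s + s` vertices is determined by ranking its vertices
into `2s` levels, so at most `(2s)^(2s)` of the `2^(s²)` orientations of such a block are
acyclic. A union bound over the at most `|V(G)|² · C(|V(H)|, s)²` blocks bounds the bad
proportion by `|V(H)|^(6s+2) · 2^(-s²)`, which is below `η²` as soon as `s ≫ log |V(H)|`.
-/

open scoped Classical

/-- The digraph `D` on `V(G) × V(H)` is `η`-good for `(G, H)`: for every edge `{u,v}`
of `G` and all subsets `A_u` of the cloud of `u` and `A_v` of the cloud of `v` with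
`|A_u|, |A_v| ≥ |V(H)|^η`, the induced subdigraph `D[A_u ∪ A_v]` contains a directed
cycle. -/
def EtaGood {α β : Type*} [Fintype β] (G : SimpleGraph α)
    (D : α × β → α × β → Prop) (η : ℝ) : Prop :=
  ∀ u v : α, G.Adj u v → ∀ Au Av : Finset (α × β),
    (∀ p ∈ Au, p.1 = u) → (∀ p ∈ Av, p.1 = v) →
    (Fintype.card β : ℝ) ^ η ≤ (Au.card : ℝ) →
    (Fintype.card β : ℝ) ^ η ≤ (Av.card : ℝ) →
    ¬ AcyclicSet D (↑Au ∪ ↑Av)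

/-- The `σ`-lexicographic-product instance of `(G, H)` determined by the family of
coin flips `o` (one boolean for each edge of `G` and each pair of `H`-vertices):
(i) inside a cloud, arcs are given by `H`;
(ii) between clouds of `G`-adjacent vertices, the orientation of each arc is given by
     the corresponding coin flip;
(iii) between clouds of nonadjacent vertices, all arcs go from the `σ`-smaller cloud
      to the `σ`-larger cloud (`σ` being the linear order on `V(G)`). -/
def randInst {α β : Type*} [LinearOrder α] (G : SimpleGraph α) (HA : β → β → Prop)
    (o : α → α → β → β → Bool) : α × β → α × β → Prop :=
  fun p q =>
    (p.1 = q.1 ∧ HA p.2 q.2) ∨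
    (G.Adj p.1 q.1 ∧ ((p.1 < q.1 ∧ o p.1 q.1 p.2 q.2 = true) ∨
                      (q.1 < p.1 ∧ o q.1 p.1 q.2 p.2 = false))) ∨
    (¬ G.Adj p.1 q.1 ∧ p.1 < q.1)


open Finset Relation

section Tournament

variable {X Y : Type*}

def biTournament (f : X → Y → Bool) : X ⊕ Y → X ⊕ Y → Prop
  | .inl x, .inr y => f x y = true
  | .inr y, .inl x => f x y = false
  | _, _ => False

theorem exists_fin_rank_of_acyclic {V : Type*} [Fintype V] {R : V → V → Prop}
    (hR : ∀ x, ¬ TransGen R x x) : ∃ ρ : V → Fin (Fintype.card V), ∀ x y, R x y → ρ x < ρ y := by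
  refine ⟨fun x => ⟨#{y | TransGen R y x}, card_lt_univ_of_notMem (by simpa using hR x)⟩, ?_⟩
  intro x y hxy
  refine Fin.mk_lt_mk.2 (card_lt_card ?_)
  rw [ssubset_iff_of_subset fun z hz => by simpa using (mem_filter.1 hz).2.tail hxy]
  exact ⟨x, by simpa using TransGen.single hxy, by simpa using hR x⟩

theorem exists_rank_of_acyclic_biTournament [Fintype X] [Fintype Y] {f : X → Y → Bool}
    (hf : ∀ z, ¬ TransGen (biTournament f) z z) :
    ∃ ρ : X ⊕ Y → Fin (Fintype.card X + Fintype.card Y),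
      f = fun x y => decide (ρ (.inl x) < ρ (.inr y)) := by
  obtain ⟨ρ, hρ⟩ := exists_fin_rank_of_acyclic hf
  refine ⟨Fin.cast (Fintype.card_sum ..) ∘ ρ, funext₂ fun x y => ?_⟩
  cases hxy : f x y
  · simpa using (hρ (.inr y) (.inl x) hxy).le
  · simpa using hρ (.inl x) (.inr y) hxy

theorem card_acyclic_biTournament_le [Fintype X] [Fintype Y] [DecidableEq X] [DecidableEq Y] :
    #{f : X → Y → Bool | ∀ z, ¬ TransGen (biTournament f) z z} ≤
      (Fintype.card X + Fintype.card Y) ^ (Fintype.card X + Fintype.card Y) := by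
  calc #{f : X → Y → Bool | ∀ z, ¬ TransGen (biTournament f) z z}
      ≤ #(univ.image fun (ρ : X ⊕ Y → Fin (Fintype.card X + Fintype.card Y)) x y =>
          decide (ρ (.inl x) < ρ (.inr y))) := by
        refine card_le_card fun f hf => ?_
        obtain ⟨ρ, rfl⟩ := exists_rank_of_acyclic_biTournament (mem_filter.1 hf).2
        exact mem_image_of_mem _ (mem_univ ρ)
    _ ≤ _ := card_image_le.trans (by simp)

end Tournament

theorem card_filter_comp_mul_card_eq {O F : Type*} [Fintype O] [Fintype F]
    (get : O → F) (put : O → F → O) (get_put : ∀ o f, get (put o f) = f)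
    (put_get : ∀ o, put o (get o) = o) (put_put : ∀ o f f', put (put o f) f' = put o f')
    (P : F → Prop) [DecidablePred P] :
    #{o | P (get o)} * Fintype.card F = #{f | P f} * Fintype.card O := by
  -- `(o, f) ↦ (get o, put o f)` is a bijection `O × F → F × O`, inverse `(f, o) ↦ (put o f, get o)`
  rw [← card_univ, ← card_univ, ← card_product, ← card_product]
  refine card_nbij' (fun p => (get p.1, put p.1 p.2)) (fun q => (put q.2 q.1, get q.2))
    ?_ ?_ ?_ ?_ <;> intro p hp <;> simp_all

section Block

variable {α β : Type*} (u v : α) (Su Sv : Finset β)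

def restrictBlock (o : α → α → β → β → Bool) : Su → Sv → Bool :=
  fun a b => o u v a b

variable [DecidableEq α] [DecidableEq β]

def updateBlock (o : α → α → β → β → Bool) (f : Su → Sv → Bool) : α → α → β → β → Bool :=
  fun x y a b => if h : x = u ∧ y = v ∧ a ∈ Su ∧ b ∈ Sv then f ⟨a, h.2.2.1⟩ ⟨b, h.2.2.2⟩
    else o x y a b

@[simp]
theorem restrictBlock_updateBlock (o : α → α → β → β → Bool) (f : Su → Sv → Bool) :
    restrictBlock u v Su Sv (updateBlock u v Su Sv o f) = f := by
  funext a b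
  simp [restrictBlock, updateBlock]

@[simp]
theorem updateBlock_restrictBlock (o : α → α → β → β → Bool) :
    updateBlock u v Su Sv o (restrictBlock u v Su Sv o) = o := by
  funext x y a b
  simp only [updateBlock, restrictBlock]
  split_ifs with h
  · obtain ⟨rfl, rfl, -, -⟩ := h
    rfl
  · rfl

@[simp]
theorem updateBlock_updateBlock (o : α → α → β → β → Bool) (f f' : Su → Sv → Bool) :
    updateBlock u v Su Sv (updateBlock u v Su Sv o f) f' = updateBlock u v Su Sv o f' := by
  funext x y a b
  simp only [updateBlock]
  split_ifs <;> rfl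

theorem card_acyclic_block_mul_le [Fintype α] [Fintype β] {s : ℕ} (hSu : #Su = s)
    (hSv : #Sv = s) :
    #{o : α → α → β → β → Bool | ∀ z, ¬ TransGen (biTournament (restrictBlock u v Su Sv o)) z z}
      * 2 ^ (s * s) ≤ (2 * s) ^ (2 * s) * Fintype.card (α → α → β → β → Bool) := by
  have hcard : Fintype.card (Su → Sv → Bool) = 2 ^ (s * s) := by
    simp only [Fintype.card_fun, Fintype.card_bool, Fintype.card_coe, hSu, hSv, ← pow_mul]
  rw [← hcard, card_filter_comp_mul_card_eq (restrictBlock u v Su Sv) (updateBlock u v Su Sv)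
    (restrictBlock_updateBlock u v Su Sv) (updateBlock_restrictBlock u v Su Sv)
    (updateBlock_updateBlock u v Su Sv) (fun f => ∀ z, ¬ TransGen (biTournament f) z z)]
  refine Nat.mul_le_mul_right _ ?_
  simpa only [Fintype.card_coe, hSu, hSv, ← two_mul] using
    card_acyclic_biTournament_le (X := Su) (Y := Sv)

end Block

section Instance

variable {α β : Type*}

theorem acyclic_biTournament_restrictBlock [LinearOrder α] {G : SimpleGraph α}
    {HA : β → β → Prop} {o : α → α → β → β → Bool} {u v : α} (huv : u < v) (hadj : G.Adj u v)
    {S : Set (α × β)} {Su Sv : Finset β} (hSu : ∀ a ∈ Su, (u, a) ∈ S)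
    (hSv : ∀ b ∈ Sv, (v, b) ∈ S) (hS : AcyclicSet (randInst G HA o) S) :
    ∀ z, ¬ TransGen (biTournament (restrictBlock u v Su Sv o)) z z := by
  intro z hz
  refine hS _ (hz.lift (Sum.elim (fun a => (u, a.1)) (fun b => (v, b.1))) ?_)
  rintro (a | b) (a' | b') h <;> simp only [biTournament] at h
  · exact ⟨hSu a a.2, hSv b'.1 b'.2, .inr (.inl ⟨hadj, .inl ⟨huv, h⟩⟩)⟩
  · exact ⟨hSv b b.2, hSu a'.1 a'.2, .inr (.inl ⟨hadj.symm, .inr ⟨huv, h⟩⟩)⟩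

theorem exists_card_eq_of_le_card_cloud {A : Finset (α × β)} {u : α} (hA : ∀ p ∈ A, p.1 = u)
    {s : ℕ} (hs : s ≤ #A) : ∃ S : Finset β, #S = s ∧ ∀ b ∈ S, (u, b) ∈ A := by
  obtain ⟨B, hBA, rfl⟩ := exists_subset_card_eq hs
  have hB : ∀ p ∈ B, p = (u, p.2) := fun p hp => Prod.ext (hA p (hBA hp)) rfl
  refine ⟨B.image Prod.snd, card_image_of_injOn fun p hp q hq hpq => ?_, fun b hb => ?_⟩
  · rw [hB p hp, hB q hq]
    exact congrArg _ hpq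
  · obtain ⟨p, hp, rfl⟩ := mem_image.1 hb
    exact hB p hp ▸ hBA hp

theorem exists_acyclic_block_of_not_etaGood [LinearOrder α] [Fintype β] {G : SimpleGraph α}
    {HA : β → β → Prop} {o : α → α → β → β → Bool} {η : ℝ}
    (h : ¬ EtaGood G (randInst G HA o) η) :
    ∃ u v : α, ∃ Su Sv : Finset β, #Su = ⌈(Fintype.card β : ℝ) ^ η⌉₊ ∧
      #Sv = ⌈(Fintype.card β : ℝ) ^ η⌉₊ ∧
      ∀ z, ¬ TransGen (biTournament (restrictBlock u v Su Sv o)) z z := by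
  simp only [EtaGood, not_forall, not_not] at h
  obtain ⟨u, v, hadj, Au, Av, hAu, hAv, hu, hv, hS⟩ := h
  obtain ⟨Su, hSu, hSuS⟩ := exists_card_eq_of_le_card_cloud hAu (Nat.ceil_le.2 hu)
  obtain ⟨Sv, hSv, hSvS⟩ := exists_card_eq_of_le_card_cloud hAv (Nat.ceil_le.2 hv)
  rcases hadj.ne.lt_or_gt with huv | hvu
  · exact ⟨u, v, Su, Sv, hSu, hSv, acyclic_biTournament_restrictBlock huv hadj
      (fun a ha => .inl (hSuS a ha)) (fun b hb => .inr (hSvS b hb)) hS⟩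
  · exact ⟨v, u, Sv, Su, hSv, hSu, acyclic_biTournament_restrictBlock hvu hadj.symm
      (fun a ha => .inr (hSvS a ha)) (fun b hb => .inl (hSuS b hb)) hS⟩

theorem card_not_etaGood_mul_le [Fintype α] [Fintype β] [DecidableEq α] [DecidableEq β]
    [LinearOrder α] (G : SimpleGraph α) (HA : β → β → Prop) (η : ℝ) :
    #{o : α → α → β → β → Bool | ¬ EtaGood G (randInst G HA o) η} *
        2 ^ (⌈(Fintype.card β : ℝ) ^ η⌉₊ * ⌈(Fintype.card β : ℝ) ^ η⌉₊) ≤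
      Fintype.card α ^ 2 * (Fintype.card β).choose ⌈(Fintype.card β : ℝ) ^ η⌉₊ ^ 2 *
        ((2 * ⌈(Fintype.card β : ℝ) ^ η⌉₊) ^ (2 * ⌈(Fintype.card β : ℝ) ^ η⌉₊) *
          Fintype.card (α → α → β → β → Bool)) := by
  set s := ⌈(Fintype.card β : ℝ) ^ η⌉₊
  set I := (univ ×ˢ univ : Finset (α × α)) ×ˢ
    (powersetCard s (univ : Finset β) ×ˢ powersetCard s (univ : Finset β))
  set E : (α × α) × Finset β × Finset β → Finset (α → α → β → β → Bool) := fun i =>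
    {o | ∀ z, ¬ TransGen (biTournament (restrictBlock i.1.1 i.1.2 i.2.1 i.2.2 o)) z z}
  have hcover : ({o | ¬ EtaGood G (randInst G HA o) η} : Finset (α → α → β → β → Bool)) ⊆
      I.biUnion E := by
    intro o ho
    obtain ⟨u, v, Su, Sv, hSu, hSv, hacyc⟩ :=
      exists_acyclic_block_of_not_etaGood (mem_filter.1 ho).2
    exact mem_biUnion.2 ⟨((u, v), (Su, Sv)), by simp [I, s, hSu, hSv], by simpa [E] using hacyc⟩
  calc _ ≤ (∑ i ∈ I, #(E i)) * 2 ^ (s * s) :=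
        Nat.mul_le_mul_right _ ((card_le_card hcover).trans card_biUnion_le)
    _ = ∑ i ∈ I, #(E i) * 2 ^ (s * s) := sum_mul ..
    _ ≤ ∑ _i ∈ I, (2 * s) ^ (2 * s) * Fintype.card (α → α → β → β → Bool) := by
        refine sum_le_sum fun i hi => ?_
        simp only [I, mem_product, mem_powersetCard] at hi
        exact card_acyclic_block_mul_le _ _ _ _ hi.2.1.2 hi.2.2.2
    _ = _ := by simp [I, card_powersetCard, sq, mul_assoc]

theorem eventually_log_le_rpow {η : ℝ} (hη : 0 < η) (C : ℝ) :
    ∀ᶠ m : ℕ in Filter.atTop, 8 * ((Nat.log 2 m : ℝ) + 1) + C ≤ (m : ℝ) ^ η := by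
  have hlog2 : 0 < Real.log 2 := Real.log_pos one_lt_two
  have hlog := (isLittleO_log_rpow_atTop hη).bound (c := Real.log 2 / 16) (by positivity)
  have hbig := (tendsto_rpow_atTop hη).eventually_ge_atTop (2 * (8 + C))
  filter_upwards [tendsto_natCast_atTop_atTop.eventually (hlog.and hbig)] with m ⟨hlogm, hm⟩
  have hnat : (Nat.log 2 m : ℝ) * Real.log 2 ≤ Real.log m := by
    have := Real.natLog_le_logb m 2
    rwa [Nat.cast_ofNat, Real.logb, le_div_iff₀ hlog2] at this
  rw [Real.norm_eq_abs, Real.norm_of_nonneg (by positivity)] at hlogm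
  nlinarith [le_abs_self (Real.log m)]

theorem card_sq_mul_choose_sq_mul_le {n m s C : ℕ} (hnm : n ≤ m) (hm : 2 ≤ m) (hsm : s ≤ m)
    (hs : 8 * (Nat.log 2 m + 1) + C ≤ s) :
    n ^ 2 * m.choose s ^ 2 * (2 * s) ^ (2 * s) * 2 ^ C ≤ 2 ^ (s * s) := by
  set L := Nat.log 2 m + 1
  have hmL : m ≤ 2 ^ L := (Nat.lt_pow_succ_log_self one_lt_two m).le
  calc n ^ 2 * m.choose s ^ 2 * (2 * s) ^ (2 * s) * 2 ^ C
      ≤ m ^ 2 * (m ^ s) ^ 2 * (m * m) ^ (2 * s) * 2 ^ C := by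
        gcongr
        exact Nat.choose_le_pow m s
    _ = m ^ (6 * s + 2) * 2 ^ C := by ring
    _ ≤ (2 ^ L) ^ (6 * s + 2) * 2 ^ C := by gcongr
    _ = 2 ^ (L * (6 * s + 2) + C) := by rw [← pow_mul, ← pow_add]
    _ ≤ 2 ^ (s * s) := Nat.pow_le_pow_right two_pos (by nlinarith)

theorem card_not_etaGood_mul_two_pow_le {α β : Type*} [Fintype α] [Fintype β] [DecidableEq α]
    [DecidableEq β] [LinearOrder α] (G : SimpleGraph α) (HA : β → β → Prop) {η : ℝ} {C : ℕ}
    (hη : η ≤ 1) (hαβ : Fintype.card α ≤ Fintype.card β) (hβ : 2 ≤ Fintype.card β)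
    (hC : 8 * (Nat.log 2 (Fintype.card β) + 1) + C ≤ ⌈(Fintype.card β : ℝ) ^ η⌉₊) :
    #{o : α → α → β → β → Bool | ¬ EtaGood G (randInst G HA o) η} * 2 ^ C ≤
      Fintype.card (α → α → β → β → Bool) := by
  set s := ⌈(Fintype.card β : ℝ) ^ η⌉₊
  have hsβ : s ≤ Fintype.card β := Nat.ceil_le.2
    (Real.rpow_le_self_of_one_le (by exact_mod_cast one_le_two.trans hβ) hη)
  have harith := card_sq_mul_choose_sq_mul_le hαβ hβ hsβ hC
  refine Nat.le_of_mul_le_mul_right ?_ (pow_pos two_pos (s * s))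
  calc _ = #{o : α → α → β → β → Bool | ¬ EtaGood G (randInst G HA o) η} * 2 ^ (s * s) *
          2 ^ C := by ring
    _ ≤ _ := Nat.mul_le_mul_right _ (card_not_etaGood_mul_le G HA η)
    _ ≤ 2 ^ (s * s) * Fintype.card (α → α → β → β → Bool) := by
        linarith [Nat.mul_le_mul_right (Fintype.card (α → α → β → β → Bool)) harith]
    _ = _ := mul_comm _ _

/-- For every `η ∈ (0, 1/2]` there is `n₀` (depending only on `η`) such that for every
simple graph `G`, digraph `H` with `|V(H)| ≥ |V(G)| ≥ n₀`, and linear order `σ` on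
`V(G)`, the random `σ`-lexicographic-product instance `D^σ_G[H]` — all orientations in
condition (ii) chosen independently and uniformly at random — is `η`-good for `(G,H)`
with probability at least `1 - η²` (stated by counting the coin-flip outcomes). -/
theorem stmt4 (η : ℝ) (hη0 : 0 < η) (hη : η ≤ 1 / 2) :
    ∃ n₀ : ℕ, ∀ (α β : Type) [Fintype α] [Fintype β] [DecidableEq α] [DecidableEq β]
      [LinearOrder α] (G : SimpleGraph α) (HA : β → β → Prop),
      (∀ b, ¬ HA b b) →
      n₀ ≤ Fintype.card α → Fintype.card α ≤ Fintype.card β →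
      (1 - η ^ 2) * (Fintype.card (α → α → β → β → Bool) : ℝ) ≤
        ((Finset.univ.filter
            (fun o : α → α → β → β → Bool => EtaGood G (randInst G HA o) η)).card : ℝ) := by
  obtain ⟨C, hC⟩ := pow_unbounded_of_one_lt (η ^ 2)⁻¹ one_lt_two
  rw [inv_lt_iff_one_lt_mul₀ (by positivity)] at hC
  obtain ⟨n₀, hn₀⟩ := Filter.eventually_atTop.1
    ((eventually_log_le_rpow hη0 C).and (Filter.eventually_ge_atTop 2))
  refine ⟨n₀, fun α β _ _ _ _ _ G HA _ hα hαβ => ?_⟩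
  obtain ⟨hlog, hβ⟩ := hn₀ _ (hα.trans hαβ)
  have hbad : (#{o : α → α → β → β → Bool | ¬ EtaGood G (randInst G HA o) η} : ℝ) * 2 ^ C ≤
      Fintype.card (α → α → β → β → Bool) := by
    exact_mod_cast card_not_etaGood_mul_two_pow_le G HA (by linarith) hαβ hβ
      (by exact_mod_cast hlog.trans (Nat.le_ceil _))
  have hsplit : (#{o : α → α → β → β → Bool | EtaGood G (randInst G HA o) η} : ℝ) +
      #{o : α → α → β → β → Bool | ¬ EtaGood G (randInst G HA o) η} =
        Fintype.card (α → α → β → β → Bool) := by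
    exact_mod_cast (card_filter_add_card_filter_not _).trans card_univ
  nlinarith [mul_le_mul_of_nonneg_right hbad (sq_nonneg η)]
end Instance
end

section
/- Let D = (V, A) be a digraph, let (v_i)_{0≤i≤k} be a vertex chain of D, and let (D_0, …, D_{k+1}, N_0, …, N_k, Z) be the associated path decomposition. Then Z ⊆ {v_0, v_k}; that is, every vertex of V other than possibly v_0 and v_k belongs to some D_i (0 ≤ i ≤ k+1) or some N_i (0 ≤ i ≤ k). -/
/-- `x` and `y` form a non-edge: distinct vertices with no arc between them
in either direction. -/
def NonEdge {V : Type*} (A : V → V → Prop) (x y : V) : Prop :=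
  x ≠ y ∧ ¬ A x y ∧ ¬ A y x

/-- One step of a vertex chain: a forward arc or a non-edge. -/
def ChainStep {V : Type*} (A : V → V → Prop) (x y : V) : Prop :=
  A x y ∨ NonEdge A x y

/-- `(v i)_{0 ≤ i ≤ k}` is a vertex chain of the digraph `A`: consecutive vertices are
joined by a forward arc or a non-edge, and no such sequence from `v 0` to `v k` is
shorter. -/
def IsVertexChain {V : Type*} (A : V → V → Prop) (k : ℕ) (v : ℕ → V) : Prop :=
  (∀ i < k, ChainStep A (v i) (v (i + 1))) ∧
  ∀ (m : ℕ) (w : ℕ → V), w 0 = v 0 → w m = v k →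
    (∀ i < m, ChainStep A (w i) (w (i + 1))) → k ≤ m

/-- Out-neighborhood `N⁺(x)`. -/
def Nplus {V : Type*} (A : V → V → Prop) (x : V) : Set V := {u | A x u}

/-- In-neighborhood `N⁻(x)`. -/
def Nminus {V : Type*} (A : V → V → Prop) (x : V) : Set V := {u | A u x}

/-- Non-neighborhood `N^o(x)`. -/
def Nzero {V : Type*} (A : V → V → Prop) (x : V) : Set V :=
  {u | u ≠ x ∧ ¬ A x u ∧ ¬ A u x}

/-- For an arc or non-arc `e = uv`, `N(e) = N⁺(v) ∩ N⁻(u)`. -/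
def NArc {V : Type*} (A : V → V → Prop) (u v : V) : Set V :=
  {w | A v w ∧ A w u}

/-- `(DD, NN, Z)` is the path decomposition associated with the vertex chain
`(v i)_{0 ≤ i ≤ k}`:
`D_i = N(e_i) \ ∪_{1 ≤ j < i} D_j` for `1 ≤ i ≤ k` (where `e_i` goes from `v (i-1)` to
`v i`); `N_i = N^o(v_i) \ (∪_{1 ≤ j ≤ k} D_j ∪ ∪_{j < i} N_j)` for `0 ≤ i ≤ k`;
`D_0 = N⁺(v_0) \ (∪_{1 ≤ j ≤ k} D_j ∪ ∪_{0 ≤ j ≤ k} N_j)`;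
`D_{k+1} = N⁻(v_k) \ ∪_{0 ≤ j ≤ k} (D_j ∪ N_j)`;
`Z = V \ (∪_{0 ≤ j ≤ k} (D_j ∪ N_j) ∪ D_{k+1})`. -/
def IsPathDecomp {V : Type*} (A : V → V → Prop) (k : ℕ) (v : ℕ → V)
    (DD NN : ℕ → Set V) (Z : Set V) : Prop :=
  (∀ i, 1 ≤ i → i ≤ k →
      DD i = NArc A (v (i - 1)) (v i) \ ⋃ j ∈ Finset.Ico 1 i, DD j) ∧
  (∀ i ≤ k, NN i =
      Nzero A (v i) \ ((⋃ j ∈ Finset.Icc 1 k, DD j) ∪ ⋃ j ∈ Finset.Ico 0 i, NN j)) ∧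
  (DD 0 = Nplus A (v 0) \ ((⋃ j ∈ Finset.Icc 1 k, DD j) ∪ ⋃ j ∈ Finset.Icc 0 k, NN j)) ∧
  (DD (k + 1) = Nminus A (v k) \ ⋃ j ∈ Finset.Icc 0 k, (DD j ∪ NN j)) ∧
  (Z = Set.univ \ ((⋃ j ∈ Finset.Icc 0 k, (DD j ∪ NN j)) ∪ DD (k + 1)))

/-- Every vertex of the digraph other than possibly `v 0` and `v k` belongs to some
`D_i` or some `N_i` of the path decomposition; that is, `Z ⊆ {v 0, v k}`. -/
theorem stmt6 {V : Type*} [Fintype V] (A : V → V → Prop) (hirr : ∀ x, ¬ A x x)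
    (k : ℕ) (v : ℕ → V) (hchain : IsVertexChain A k v)
    (DD NN : ℕ → Set V) (Z : Set V) (hdec : IsPathDecomp A k v DD NN Z) :
    Z ⊆ {v 0, v k} := by
  obtain ⟨hD, hN, hD0, hDk1, hZ⟩ := hdec
  intro x hx
  by_contra hxv
  simp only [Set.mem_insert_iff, Set.mem_singleton_iff, not_or] at hxv
  obtain ⟨hx0, hxk⟩ := hxv
  rw [hZ] at hx
  simp only [Set.mem_diff, Set.mem_univ, Set.mem_union, Set.mem_iUnion,
    Finset.mem_Icc, true_and, not_or, not_exists] at hx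
  obtain ⟨hmem, hmemk1⟩ := hx
  have hND : ∀ j, j ≤ k → x ∉ DD j := fun j hj => (hmem j ⟨Nat.zero_le j, hj⟩).1
  have hNN : ∀ j, j ≤ k → x ∉ NN j := fun j hj => (hmem j ⟨Nat.zero_le j, hj⟩).2
  -- h1 : x is equal or adjacent to every chain vertex
  have h1 : ∀ i, i ≤ k → x = v i ∨ A (v i) x ∨ A x (v i) := by
    intro i hi
    by_contra h
    push_neg at h
    apply hNN i hi
    rw [hN i hi]
    refine ⟨⟨h.1, h.2.1, h.2.2⟩, ?_⟩
    simp only [Set.mem_union, Set.mem_iUnion, Finset.mem_Icc, Finset.mem_Ico, not_or,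
      not_exists]
    constructor
    · intro j hj hxj
      exact hND j hj.2 hxj
    · intro j hj hxj
      exact hNN j (le_of_lt (lt_of_lt_of_le hj.2 hi)) hxj
  -- h2 : no arc from v 0 to x
  have h2 : ¬ A (v 0) x := by
    intro ha
    apply hND 0 (Nat.zero_le k)
    rw [hD0]
    refine ⟨ha, ?_⟩
    simp only [Set.mem_union, Set.mem_iUnion, Finset.mem_Icc, not_or, not_exists]
    exact ⟨fun j hj hxj => hND j hj.2 hxj, fun j hj hxj => hNN j hj.2 hxj⟩
  -- h3 : no arc from x to v k
  have h3 : ¬ A x (v k) := by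
    intro ha
    apply hmemk1
    rw [hDk1]
    refine ⟨ha, ?_⟩
    simp only [Set.mem_iUnion, Finset.mem_Icc, Set.mem_union, not_exists, not_or]
    exact fun j hj => ⟨hND j hj.2, hNN j hj.2⟩
  -- h4 : for 1 ≤ i ≤ k, not both A (v i) x and A x (v (i-1))
  have h4 : ∀ i, 1 ≤ i → i ≤ k → ¬ (A (v i) x ∧ A x (v (i - 1))) := by
    rintro i hi1 hik ⟨ha, hb⟩
    apply hND i hik
    rw [hD i hi1 hik]
    refine ⟨⟨ha, hb⟩, ?_⟩
    simp only [Set.mem_iUnion, Finset.mem_Ico, not_exists]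
    intro j hj hxj
    exact hND j (le_of_lt (lt_of_lt_of_le hj.2 hik)) hxj
  -- A (v k) x holds
  have hk : A (v k) x := by
    rcases h1 k le_rfl with h | h | h
    · exact absurd h hxk
    · exact h
    · exact absurd h h3
  have hex : ∃ i, i ≤ k ∧ A (v i) x := ⟨k, le_rfl, hk⟩
  classical
  set i := Nat.find hex with hidef
  obtain ⟨hik, hiA⟩ : i ≤ k ∧ A (v i) x := Nat.find_spec hex
  have hmin : ∀ j, j < i → j ≤ k → ¬ A (v j) x := by
    intro j hj hjk ha
    exact Nat.find_min hex hj ⟨hjk, ha⟩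
  have hi1 : 1 ≤ i := by
    rcases Nat.eq_zero_or_pos i with h | h
    · rw [h] at hiA; exact absurd hiA h2
    · exact h
  have hb : ¬ A x (v (i - 1)) := fun hb => h4 i hi1 hik ⟨hiA, hb⟩
  have hf : ¬ A (v (i - 1)) x :=
    hmin (i - 1) (Nat.sub_lt hi1 Nat.one_pos) (le_trans (Nat.sub_le i 1) hik)
  have hxe : x = v (i - 1) := by
    rcases h1 (i - 1) (le_trans (Nat.sub_le i 1) hik) with h | h | h
    · exact h
    · exact absurd h hf
    · exact absurd h hb
  have hi2 : 2 ≤ i := by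
    rcases Nat.lt_or_ge i 2 with h | h
    · have : i = 1 := by omega
      rw [this, Nat.sub_self] at hxe
      exact absurd hxe hx0
    · exact h
  have hji : i - 2 + 1 = i - 1 := by omega
  have hstep := hchain.1 (i - 2) (by omega)
  rw [hji] at hstep
  rcases hstep with h | ⟨hne, hna, hnb⟩
  · rw [← hxe] at h
    exact hmin (i - 2) (by omega) (by omega) h
  · rw [← hxe] at hne hna hnb
    rcases h1 (i - 2) (by omega) with h | h | h
    · exact hne h.symm
    · exact hna h
    · exact hnb h
end

section
/- Let D = (V, A) be a digraph with a vertex chain (v_i)_{0≤i≤k} and associated path decomposition (D_0, …, D_{k+1}, N_0, …, N_k, Z). Let 0 ≤ i, j ≤ k+1 with j ≥ i + 5. For every u ∈ D_i and w ∈ D_j, the arc wu belongs to A (i.e. u ∈ N⁺(w)). Furthermore, for every u ∈ N_i and w ∈ N_{j-1}, the arc wu belongs to A. -/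
/-!
Elements of `D_i` and `N_i` are one chain step (an arc or a non-edge) away from `v_i`, and
elements of `D_j` and `N_{j-1}` one step away from `v_{j-1}`. If the pair `u, w` were not
joined by the backward arc `w u`, then `u → w` would be a chain step as well (`u ≠ w`, the
parts being disjoint), and `v_i, u, w, v_{j-1}` would be a three-step shortcut of the
segment of the chain from `v_i` to `v_{j-1}`, which has at least four steps; but segments of
a shortest chain are shortest.
-/

def IsChainWalk {V : Type*} (A : V → V → Prop) (m : ℕ) (w : ℕ → V) : Prop :=
  ∀ t < m, ChainStep A (w t) (w (t + 1))

/-- `p 0, …, p a` followed by `q 1, q 2, …`; `q 0` is dropped, so this concatenates walks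
only when `p a = q 0`. -/
def walkAppend {V : Type*} (a : ℕ) (p q : ℕ → V) : ℕ → V :=
  fun t => if t ≤ a then p t else q (t - a)

section Walks

variable {V : Type*} {A : V → V → Prop}

theorem NonEdge.symm {x y : V} (h : NonEdge A x y) : NonEdge A y x :=
  ⟨h.1.symm, h.2.2, h.2.1⟩

theorem chainStep_of_ne_of_not_adj {x y : V} (hne : x ≠ y) (h : ¬ A y x) :
    ChainStep A x y :=
  (em (A x y)).imp id fun hxy => ⟨hne, hxy, h⟩

theorem walkAppend_zero (a : ℕ) (p q : ℕ → V) : walkAppend a p q 0 = p 0 := by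
  simp [walkAppend]

theorem walkAppend_add {a : ℕ} {p q : ℕ → V} (hpq : p a = q 0) (b : ℕ) :
    walkAppend a p q (a + b) = q b := by
  unfold walkAppend
  split_ifs with h
  · obtain rfl : b = 0 := by omega
    simpa using hpq
  · simp

theorem IsChainWalk.mono {m n : ℕ} {w : ℕ → V} (h : IsChainWalk A n w) (hmn : m ≤ n) :
    IsChainWalk A m w :=
  fun t ht => h t (by omega)

theorem IsChainWalk.drop {n : ℕ} {w : ℕ → V} (h : IsChainWalk A n w) (l : ℕ) :
    IsChainWalk A (n - l) (fun t => w (l + t)) :=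
  fun t ht => h (l + t) (by omega)

theorem IsChainWalk.append {a b : ℕ} {p q : ℕ → V} (hp : IsChainWalk A a p)
    (hq : IsChainWalk A b q) (hpq : p a = q 0) :
    IsChainWalk A (a + b) (walkAppend a p q) := by
  intro t ht
  by_cases hta : t < a
  · simpa [walkAppend, hta.le, Nat.succ_le_of_lt hta] using hp t hta
  · obtain ⟨s, rfl⟩ := Nat.exists_eq_add_of_le (not_lt.mp hta)
    rw [walkAppend_add hpq, add_assoc, walkAppend_add hpq]
    exact hq s (by omega)

def threeStepWalk (x y z w : V) : ℕ → V :=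
  fun t => if t = 0 then x else if t = 1 then y else if t = 2 then z else w

theorem isChainWalk_threeStepWalk {x y z w : V} (hxy : ChainStep A x y)
    (hyz : ChainStep A y z) (hzw : ChainStep A z w) :
    IsChainWalk A 3 (threeStepWalk x y z w) := by
  intro t ht
  interval_cases t <;> simpa [threeStepWalk]

end Walks

namespace IsVertexChain

variable {V : Type*} {A : V → V → Prop} {k : ℕ} {v : ℕ → V}

/-- Subchains of a vertex chain are shortest: splicing a shorter walk from `v i` to
`v l` into the chain would give a shorter sequence from `v 0` to `v k`. -/
theorem le_add_of_walk (hchain : IsVertexChain A k v) {i l m : ℕ} {p : ℕ → V}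
    (hil : i ≤ l) (hlk : l ≤ k) (hp : IsChainWalk A m p) (hp0 : p 0 = v i)
    (hpm : p m = v l) : l ≤ i + m := by
  have hsteps : IsChainWalk A k v := hchain.1
  have hprefix := (hsteps.mono (hil.trans hlk)).append hp hp0.symm
  have hwalk := hprefix.append (hsteps.drop l) (by simpa [walkAppend_add hp0.symm])
  have hlen := hchain.2 _ _ (by simp [walkAppend_zero]) ?_ hwalk
  · omega
  · rw [walkAppend_add (by simpa [walkAppend_add hp0.symm])]
    congr 1
    omega

theorem le_add_three (hchain : IsVertexChain A k v) {i l : ℕ} {x y : V}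
    (hil : i ≤ l) (hlk : l ≤ k) (hx : ChainStep A (v i) x) (hxy : ChainStep A x y)
    (hy : ChainStep A y (v l)) : l ≤ i + 3 :=
  hchain.le_add_of_walk hil hlk (isChainWalk_threeStepWalk hx hxy hy) rfl rfl

theorem adj_of_chainStep_of_chainStep (hchain : IsVertexChain A k v) {i j : ℕ}
    (hj : j ≤ k + 1) (hij : i + 5 ≤ j) {x y : V} (hx : ChainStep A (v i) x)
    (hy : ChainStep A y (v (j - 1))) (hne : x ≠ y) : A y x := by
  by_contra hyx
  have := hchain.le_add_three (by omega) (by omega) hx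
    (chainStep_of_ne_of_not_adj hne hyx) hy
  omega

end IsVertexChain

namespace IsPathDecomp

variable {V : Type*} {A : V → V → Prop} {k : ℕ} {v : ℕ → V} {DD NN : ℕ → Set V}
  {Z : Set V}

theorem adj_of_mem_DD (hdec : IsPathDecomp A k v DD NN Z) {i : ℕ} (hik : i ≤ k)
    {u : V} (hu : u ∈ DD i) : A (v i) u := by
  rcases Nat.eq_zero_or_pos i with rfl | hi
  · rw [hdec.2.2.1] at hu
    exact hu.1
  · rw [hdec.1 i hi hik] at hu
    exact hu.1.1

theorem adj_pred_of_mem_DD (hdec : IsPathDecomp A k v DD NN Z) {j : ℕ} (hj1 : 1 ≤ j)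
    (hjk : j ≤ k + 1) {w : V} (hw : w ∈ DD j) : A w (v (j - 1)) := by
  rcases Nat.lt_or_ge j (k + 1) with hjk' | hjk'
  · rw [hdec.1 j hj1 (by omega)] at hw
    exact hw.1.2
  · obtain rfl : j = k + 1 := by omega
    rw [hdec.2.2.2.1] at hw
    exact hw.1

theorem nonEdge_of_mem_NN (hdec : IsPathDecomp A k v DD NN Z) {i : ℕ} (hik : i ≤ k)
    {u : V} (hu : u ∈ NN i) : NonEdge A (v i) u := by
  rw [hdec.2.1 i hik] at hu
  exact ⟨hu.1.1.symm, hu.1.2⟩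

theorem disjoint_DD (hdec : IsPathDecomp A k v DD NN Z) {i j : ℕ} (hij : i < j)
    (hjk : j ≤ k + 1) : Disjoint (DD i) (DD j) := by
  rw [Set.disjoint_left]
  intro u hui huj
  rcases Nat.lt_or_ge j (k + 1) with hjk' | hjk'
  · rcases Nat.eq_zero_or_pos i with rfl | hi
    · rw [hdec.2.2.1] at hui
      exact hui.2 (Or.inl (Set.mem_biUnion (Finset.mem_Icc.mpr ⟨hij, by omega⟩) huj))
    · rw [hdec.1 j (by omega) (by omega)] at huj
      exact huj.2 (Set.mem_biUnion (Finset.mem_Ico.mpr ⟨hi, hij⟩) hui)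
  · obtain rfl : j = k + 1 := by omega
    rw [hdec.2.2.2.1] at huj
    exact huj.2 (Set.mem_biUnion (Finset.mem_Icc.mpr ⟨i.zero_le, by omega⟩) (Or.inl hui))

theorem disjoint_NN (hdec : IsPathDecomp A k v DD NN Z) {i j : ℕ} (hij : i < j)
    (hjk : j ≤ k) : Disjoint (NN i) (NN j) := by
  rw [Set.disjoint_left]
  intro u hui huj
  rw [hdec.2.1 j hjk] at huj
  exact huj.2 (Or.inr (Set.mem_biUnion (Finset.mem_Ico.mpr ⟨i.zero_le, hij⟩) hui))

end IsPathDecomp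

theorem stmt7_general {V : Type*} (A : V → V → Prop)
    (k : ℕ) (v : ℕ → V) (hchain : IsVertexChain A k v)
    (DD NN : ℕ → Set V) (Z : Set V) (hdec : IsPathDecomp A k v DD NN Z)
    (i j : ℕ) (hj : j ≤ k + 1) (hij : i + 5 ≤ j) :
    (∀ u ∈ DD i, ∀ w ∈ DD j, A w u) ∧
    (∀ u ∈ NN i, ∀ w ∈ NN (j - 1), A w u) := by
  constructor
  · intro u hu w hw
    exact hchain.adj_of_chainStep_of_chainStep hj hij
      (Or.inl (hdec.adj_of_mem_DD (by omega) hu))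
      (Or.inl (hdec.adj_pred_of_mem_DD (by omega) hj hw))
      ((hdec.disjoint_DD (by omega) hj).ne_of_mem hu hw)
  · intro u hu w hw
    exact hchain.adj_of_chainStep_of_chainStep hj hij
      (Or.inr (hdec.nonEdge_of_mem_NN (by omega) hu))
      (Or.inr (hdec.nonEdge_of_mem_NN (by omega) hw).symm)
      ((hdec.disjoint_NN (by omega) (by omega)).ne_of_mem hu hw)

/-- Long arcs go backwards: for `j ≥ i + 5`, every arc between `D_i` and `D_j` goes
from `D_j` to `D_i`, and every arc between `N_i` and `N_{j-1}` goes from `N_{j-1}` to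
`N_i`. -/
theorem stmt7 {V : Type*} [Fintype V] (A : V → V → Prop) (hirr : ∀ x, ¬ A x x)
    (k : ℕ) (v : ℕ → V) (hchain : IsVertexChain A k v)
    (DD NN : ℕ → Set V) (Z : Set V) (hdec : IsPathDecomp A k v DD NN Z)
    (i j : ℕ) (hi : i ≤ k + 1) (hj : j ≤ k + 1) (hij : i + 5 ≤ j) :
    (∀ u ∈ DD i, ∀ w ∈ DD j, A w u) ∧
    (∀ u ∈ NN i, ∀ w ∈ NN (j - 1), A w u) :=
  stmt7_general A k v hchain DD NN Z hdec i j hj hij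
end

section
/- Let D be a maximally C₃-free digraph with independence number at most α (α ≥ 1), and let uv be a non-arc of D (there is no arc between u and v in either direction). Then there exists a vertex w of D with N(uv) ⊆ N^o(w); consequently, for every integer c such that every C₃-free oriented digraph with independence number at most α − 1 has dichromatic number at most c, we have χ⃗(D[N(uv)]) ≤ c. -/
/-- The digraph `A` is oriented: it contains no digon. -/
def Oriented {V : Type*} (A : V → V → Prop) : Prop :=
  ∀ u w, A u w → ¬ A w u

/-- The digraph `A` is `C₃`-free: it contains no directed triangle. -/
def C3Free {V : Type*} (A : V → V → Prop) : Prop :=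
  ∀ x y z : V, A x y → A y z → ¬ A z x

/-- `S` is an independent set of the digraph `A`. -/
def IndepSetD {V : Type*} (A : V → V → Prop) (S : Set V) : Prop :=
  ∀ u ∈ S, ∀ v ∈ S, u ≠ v → ¬ A u v

/-- The digraph `A` has independence number at most `a`. -/
def IndepAtMost {V : Type*} (A : V → V → Prop) (a : ℕ) : Prop :=
  ∀ S : Finset V, IndepSetD A ↑S → S.card ≤ a

/-- The independence number of the digraph `A`. -/
noncomputable def indepNum {V : Type*} [Fintype V] (A : V → V → Prop) : ℕ :=
  sSup {n | ∃ S : Finset V, IndepSetD A ↑S ∧ S.card = n}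

/-- The oriented digraph `A` is maximally `C₃`-free: it is `C₃`-free and adding either
orientation of any non-edge would create a directed triangle. -/
def MaxC3Free {V : Type*} (A : V → V → Prop) : Prop :=
  Oriented A ∧ C3Free A ∧
  ∀ u w : V, u ≠ w → ¬ A u w → ¬ A w u →
    (∃ x, A w x ∧ A x u) ∧ (∃ x, A u x ∧ A x w)

lemma aux_no_transgen {α : Type*} {R : α → α → Prop} (h : ∀ a b, ¬ R a b) :
    ∀ p q : α, ¬ Relation.TransGen R p q := by
  intro p q hpq
  induction hpq with
  | single h1 => exact h _ _ h1
  | tail _ h1 _ => exact h _ _ h1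

lemma aux_exists_dicoloring {W : Type} [Fintype W] (B : W → W → Prop) (hBo : Oriented B) :
    HasDicoloringOn B Set.univ (Fintype.card W) := by
  classical
  refine ⟨fun x => (Fintype.equivFin W x : ℕ), fun x _ => (Fintype.equivFin W x).isLt, ?_⟩
  intro i x
  refine aux_no_transgen ?_ x x
  rintro p q ⟨⟨-, hpi⟩, ⟨-, hqi⟩, hpq⟩
  have : p = q := (Fintype.equivFin W).injective (Fin.val_injective (hpi.trans hqi.symm))
  subst this
  exact hBo p p hpq hpq

/-- In a maximally `C₃`-free digraph with independence number at most `α ≥ 1`, for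
every non-arc `uv` there is a vertex `w` with `N(uv) ⊆ N^o(w)`; consequently, for
every integer `c` such that every `C₃`-free oriented digraph with independence number
at most `α - 1` has dichromatic number at most `c`, we have `χ⃗(D[N(uv)]) ≤ c`. -/
theorem stmt14 {V : Type} [Fintype V] (A : V → V → Prop)
    (a : ℕ) (ha : 1 ≤ a) (hmax : MaxC3Free A) (hind : IndepAtMost A a)
    (u v : V) (huv : u ≠ v) (h1 : ¬ A u v) (h2 : ¬ A v u) :
    (∃ w : V, NArc A u v ⊆ Nzero A w) ∧
    ∀ c : ℕ, (∀ (W : Type) [Fintype W] (B : W → W → Prop),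
        Oriented B → C3Free B → IndepAtMost B (a - 1) →
        dichromOn B Set.univ ≤ c) →
      dichromOn A (NArc A u v) ≤ c := by
  classical
  obtain ⟨horient, hc3, hadd⟩ := hmax
  obtain ⟨-, ⟨w, hw1, hw2⟩⟩ := hadd u v huv h1 h2
  have hsub : NArc A u v ⊆ Nzero A w := by
    rintro x ⟨hvx, hxu⟩
    refine ⟨?_, ?_, ?_⟩
    · intro hxw; exact horient u w hw1 (hxw ▸ hxu)
    · intro hwx; exact hc3 u w x hw1 hwx hxu
    · intro hxw; exact hc3 x w v hxw hw2 hvx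
  refine ⟨⟨w, hsub⟩, ?_⟩
  intro c hc
  set S : Set V := NArc A u v with hS
  haveI : Fintype ↥S := Fintype.ofFinite _
  set B : ↥S → ↥S → Prop := fun p q => A p.1 q.1 with hB
  have hBo : Oriented B := fun p q h => horient _ _ h
  have hBc : C3Free B := fun x y z hxy hyz => hc3 _ _ _ hxy hyz
  have hBi : IndepAtMost B (a - 1) := by
    intro T hT
    have hwni : w ∉ T.image Subtype.val := by
      intro hmem
      obtain ⟨t, -, ht⟩ := Finset.mem_image.1 hmem
      exact (hsub t.2).1 ht
    have hind' : IndepSetD A ↑(insert w (T.image Subtype.val)) := by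
      intro x hx y hy hne
      simp only [Finset.coe_insert, Set.mem_insert_iff, Finset.mem_coe, Finset.mem_image] at hx hy
      rcases hx with rfl | ⟨s, hs, rfl⟩
      · rcases hy with rfl | ⟨t, ht, rfl⟩
        · exact absurd rfl hne
        · exact (hsub t.2).2.1
      · rcases hy with rfl | ⟨t, ht, rfl⟩
        · exact (hsub s.2).2.2
        · refine hT s hs t ht ?_
          intro h; exact hne (congrArg Subtype.val h)
    have hcard := hind _ hind'
    rw [Finset.card_insert_of_notMem hwni,
      Finset.card_image_of_injective _ Subtype.val_injective] at hcard
    omega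
  have hd := hc ↥S B hBo hBc hBi
  have hne : {n | HasDicoloringOn B Set.univ n}.Nonempty :=
    ⟨Fintype.card ↥S, aux_exists_dicoloring B hBo⟩
  have hmem : HasDicoloringOn B Set.univ (dichromOn B Set.univ) := Nat.sInf_mem hne
  obtain ⟨f, hf1, hf2⟩ := hmem
  set n := dichromOn B Set.univ with hn
  have htrans : HasDicoloringOn A S n := by
    refine ⟨fun x => if h : x ∈ S then f ⟨x, h⟩ else 0, ?_, ?_⟩
    · intro x hx
      simp only [dif_pos hx]
      exact hf1 _ trivial
    · intro i x hx
      set g : V → ℕ := fun x => if h : x ∈ S then f ⟨x, h⟩ else 0 with hg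
      have key : ∀ p q : V, Relation.TransGen
          (fun p q => p ∈ {z | z ∈ S ∧ g z = i} ∧ q ∈ {z | z ∈ S ∧ g z = i} ∧ A p q) p q →
          ∀ (hp : p ∈ S) (hq : q ∈ S), Relation.TransGen
          (fun (p q : ↥S) => p ∈ ({z | z ∈ (Set.univ : Set ↥S) ∧ f z = i}) ∧
            q ∈ ({z | z ∈ (Set.univ : Set ↥S) ∧ f z = i}) ∧ B p q) ⟨p, hp⟩ ⟨q, hq⟩ := by
        intro p q h
        induction h with
        | single h =>
          intro hp hq
          obtain ⟨⟨-, hpi⟩, ⟨-, hqi⟩, hA⟩ := h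
          rw [hg] at hpi hqi
          simp only [dif_pos hp] at hpi
          simp only [dif_pos hq] at hqi
          exact Relation.TransGen.single ⟨⟨trivial, hpi⟩, ⟨trivial, hqi⟩, hA⟩
        | tail _ h ih =>
          intro hp hq
          obtain ⟨⟨hbS, hbi⟩, ⟨-, hqi⟩, hA⟩ := h
          rw [hg] at hbi hqi
          simp only [dif_pos hbS] at hbi
          simp only [dif_pos hq] at hqi
          exact (ih hp hbS).tail ⟨⟨trivial, hbi⟩, ⟨trivial, hqi⟩, hA⟩
      have hxS : x ∈ S := by
        cases hx with
        | single h => exact h.1.1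
        | tail _ h => exact h.2.1.1
      exact hf2 i ⟨x, hxS⟩ (key x x hx hxS hxS)
  exact le_trans (Nat.sInf_le htrans) hd
end

section
/- Let D be a nonempty oriented C₃-free digraph with independence number 2. Then there is a vertex v of D such that the induced subdigraph D[N⁺(v)] is a tournament, i.e. every two distinct vertices of N⁺(v) are joined by exactly one arc. -/
/-- In a nonempty oriented `C₃`-free digraph with independence number `2`, there is a
vertex `v` such that the induced subdigraph on `N⁺(v)` is a tournament: every two
distinct vertices of `N⁺(v)` are joined by exactly one arc. -/
theorem stmt18 {V : Type} [Fintype V] [Nonempty V] (A : V → V → Prop)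
    (hor : Oriented A) (hc3 : C3Free A) (hind : indepNum A = 2) :
    ∃ v : V, ∀ x ∈ {u | A v u}, ∀ y ∈ {u | A v u}, x ≠ y → Xor' (A x y) (A y x) := by
  classical
  have irrefl : ∀ u : V, ¬ A u u := fun u h => hor u u h h
  -- no independent triple
  have no3 : ∀ x y z : V, x ≠ y → x ≠ z → y ≠ z →
      ¬A x y → ¬A y x → ¬A x z → ¬A z x → ¬A y z → ¬A z y → False := by
    intro x y z hxy hxz hyz nxy nyx nxz nzx nyz nzy
    have hcard : ({x, y, z} : Finset V).card = 3 := by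
      rw [Finset.card_eq_three]; exact ⟨x, y, z, hxy, hxz, hyz, rfl⟩
    have hindep : IndepSetD A ↑({x, y, z} : Finset V) := by
      intro u hu w hw huw
      simp only [Finset.coe_insert, Set.mem_insert_iff, Finset.coe_singleton,
        Set.mem_singleton_iff] at hu hw
      rcases hu with rfl | rfl | rfl <;> rcases hw with rfl | rfl | rfl <;>
        first | exact absurd rfl huw | assumption
    have hmem : (3 : ℕ) ∈ {n | ∃ S : Finset V, IndepSetD A ↑S ∧ S.card = n} :=
      ⟨_, hindep, hcard⟩
    have hbdd : BddAbove {n | ∃ S : Finset V, IndepSetD A ↑S ∧ S.card = n} := by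
      refine ⟨Fintype.card V, fun n hn => ?_⟩
      obtain ⟨S, _, rfl⟩ := hn
      exact Finset.card_le_univ S
    have h3 : (3 : ℕ) ≤ indepNum A := le_csSup hbdd hmem
    rw [hind] at h3
    omega
  -- v : a vertex of minimum out-degree
  obtain ⟨v, -, hv⟩ := Finset.exists_min_image Finset.univ
    (fun u => (Finset.univ.filter (fun w => A u w)).card) Finset.univ_nonempty
  simp only [Finset.mem_univ, true_implies] at hv
  by_cases htour : ∀ x ∈ {u | A v u}, ∀ y ∈ {u | A v u}, x ≠ y → (A x y ∨ A y x)
  · refine ⟨v, fun x hx y hy hxy => ?_⟩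
    rcases htour x hx y hy hxy with h | h
    · exact Or.inl ⟨h, hor x y h⟩
    · exact Or.inr ⟨h, hor y x h⟩
  · push_neg at htour
    obtain ⟨x, hx, y, hy, hxy, nxy, nyx⟩ := htour
    simp only [Set.mem_setOf_eq] at hx hy
    -- Z-property: every out-neighbour of v has an out-neighbour non-adjacent to v
    have zprop : ∀ u, A v u → ∃ z, z ≠ v ∧ ¬A v z ∧ ¬A z v ∧ A u z := by
      intro u hu
      by_contra hno
      push_neg at hno
      have hsub : Finset.univ.filter (fun w => A u w) ⊆
          (Finset.univ.filter (fun w => A v w)).erase u := by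
        intro w hw
        simp only [Finset.mem_filter, Finset.mem_univ, true_and] at hw
        have hwu : w ≠ u := fun h => irrefl u (h ▸ hw)
        have hwv : w ≠ v := fun h => hor v u hu (h ▸ hw)
        have hvw : A v w := by
          by_contra hvw
          have hwv' : A w v := by
            by_contra hwv''
            exact hno w hwv hvw hwv'' hw
          exact hc3 v u w hu hw hwv'
        exact Finset.mem_erase.mpr ⟨hwu,
          Finset.mem_filter.mpr ⟨Finset.mem_univ _, hvw⟩⟩
      have humem : u ∈ Finset.univ.filter (fun w => A v w) :=
        Finset.mem_filter.mpr ⟨Finset.mem_univ _, hu⟩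
      have h1 := Finset.card_le_card hsub
      rw [Finset.card_erase_of_mem humem] at h1
      have h2 := hv u
      have h3 : 0 < (Finset.univ.filter (fun w => A v w)).card :=
        Finset.card_pos.mpr ⟨u, humem⟩
      omega
    -- the non-neighbourhood of v, as a finset
    set Tfin : Finset V :=
      Finset.univ.filter (fun z => z ≠ v ∧ ¬A v z ∧ ¬A z v) with hTfin
    have Tmem : ∀ z, z ∈ Tfin ↔ z ≠ v ∧ ¬A v z ∧ ¬A z v := by
      intro z
      simp [hTfin]
    have Tadj : ∀ z w, z ∈ Tfin → w ∈ Tfin → z ≠ w → A z w ∨ A w z := by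
      intro z w hz hw hzw
      rw [Tmem] at hz hw
      by_contra h
      push_neg at h
      exact no3 v z w (Ne.symm hz.1) (Ne.symm hw.1) hzw
        hz.2.1 hz.2.2 hw.2.1 hw.2.2 h.1 h.2
    have Tne : Tfin.Nonempty := by
      obtain ⟨z, hz1, hz2, hz3, -⟩ := zprop x hx
      exact ⟨z, (Tmem z).mpr ⟨hz1, hz2, hz3⟩⟩
    -- t : a sink of the tournament Tfin
    obtain ⟨t, htT, htmin⟩ := Finset.exists_min_image Tfin
      (fun z => (Tfin.filter (fun w => A z w)).card) Tne
    have tsink : ∀ z ∈ Tfin, ¬A t z := by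
      intro z hzT htz
      have hsub : Tfin.filter (fun w => A z w) ⊆
          (Tfin.filter (fun w => A t w)).erase z := by
        intro w hw
        rw [Finset.mem_filter] at hw
        obtain ⟨hwT, hzw⟩ := hw
        have hwz : w ≠ z := fun h => irrefl z (h ▸ hzw)
        have hwt : w ≠ t := by rintro rfl; exact hor w z htz hzw
        have htw : A t w := by
          rcases Tadj t w htT hwT (Ne.symm hwt) with h | h
          · exact h
          · exact absurd h (hc3 t z w htz hzw)
        exact Finset.mem_erase.mpr ⟨hwz, Finset.mem_filter.mpr ⟨hwT, htw⟩⟩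
      have hz' : z ∈ Tfin.filter (fun w => A t w) :=
        Finset.mem_filter.mpr ⟨hzT, htz⟩
      have h1 := Finset.card_le_card hsub
      rw [Finset.card_erase_of_mem hz'] at h1
      have h2 := htmin z hzT
      have h3 : 0 < (Tfin.filter (fun w => A t w)).card :=
        Finset.card_pos.mpr ⟨z, hz'⟩
      omega
    have htv := (Tmem t).mp htT
    -- out-neighbours of t are not out-neighbours of v
    have nplusT : ∀ u, A t u → ¬A v u := by
      intro u htu hvu
      obtain ⟨z, hz1, hz2, hz3, huz⟩ := zprop u hvu
      have hzT : z ∈ Tfin := (Tmem z).mpr ⟨hz1, hz2, hz3⟩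
      have hzt : z ≠ t := by rintro rfl; exact hor z u htu huz
      rcases Tadj t z htT hzT (Ne.symm hzt) with h | h
      · exact tsink z hzT h
      · exact hc3 t u z htu huz h
    -- out-neighbours of t dominate v
    have hav : ∀ a, A t a → A a v := by
      intro a hta
      have hva : ¬ A v a := nplusT a hta
      by_contra hav'
      have hanv : a ≠ v := by rintro rfl; exact htv.2.2 hta
      exact tsink a ((Tmem a).mpr ⟨hanv, hva, hav'⟩) hta
    -- one of x, y dominates t
    have hxt : A x t ∨ A y t := by
      by_contra h
      push_neg at h
      have hxnt : x ≠ t := by rintro rfl; exact htv.2.1 hx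
      have hynt : y ≠ t := by rintro rfl; exact htv.2.1 hy
      exact no3 x y t hxy hxnt hynt nxy nyx h.1
        (fun h' => nplusT x h' hx) h.2 (fun h' => nplusT y h' hy)
    -- p : a vertex with A v p and A p t
    obtain ⟨p, hvp, hpt⟩ : ∃ p, A v p ∧ A p t := by
      rcases hxt with h | h
      · exact ⟨x, hx, h⟩
      · exact ⟨y, hy, h⟩
    -- p is non-adjacent to every out-neighbour of t
    have pnadj : ∀ a, A t a → ¬A p a ∧ ¬A a p ∧ p ≠ a := by
      intro a hta
      have hav' : A a v := hav a hta
      refine ⟨fun h => hc3 p a v h hav' hvp, hc3 p t a hpt hta, ?_⟩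
      rintro rfl
      exact hor v p hvp hav'
    -- hence N⁺(t) is a tournament
    refine ⟨t, fun a ha b hb hab => ?_⟩
    simp only [Set.mem_setOf_eq] at ha hb
    have : A a b ∨ A b a := by
      by_contra h
      push_neg at h
      obtain ⟨npa, nap, hpa⟩ := pnadj a ha
      obtain ⟨npb, nbp, hpb⟩ := pnadj b hb
      exact no3 p a b hpa hpb hab npa nap npb nbp h.1 h.2
    rcases this with h | h
    · exact Or.inl ⟨h, hor a b h⟩
    · exact Or.inr ⟨h, hor b a h⟩
end
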